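/- arXiv:1904.06161 — 2 statements merged into one kernel-verified Lean document; each statement's English description precedes it below -/
import Mathlib

section
/- Mason's rule for the Cayley graph walk with unit passage times: for every g ∈ G with g ≠ 1 and every real z with 0 ≤ z < 1, the matrix I − z·P_{[g]} is invertible and the probability generating function of the first passage time satisfies Σ_{n=0}^{∞} zⁿ · μ{ τ_g = n } = ((I − z·P_{[g]})⁻¹)_{1,g}. -/
open MeasureTheory
open scoped ENNReal NNReal

/-- Discrete measurable structure on the elements of a finset. -/
instance fintypeStepSpace {α : Type*} (S : Finset α) : MeasurableSpace S := ⊤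

/-- The right random walk on the Cayley graph of `(G,S)` started at the identity:
`W_0(ω) = 1` and `W_n(ω) = ω(0)·ω(1)⋯ω(n−1)`. -/
def walk {G : Type*} [Group G] (S : Finset G) (ω : ℕ → S) (n : ℕ) : G :=
  (List.ofFn fun i : Fin n => (ω i : G)).prod

/-- The first passage time `τ_g(ω) = inf { n : ℕ | W_n(ω) = g }`, valued in `ℕ∞`
(in particular it is `⊤` if the walk never reaches `g`). -/
noncomputable def tau {G : Type*} [Group G] (S : Finset G) (g : G) (ω : ℕ → S) : ℕ∞ :=
  sInf ((Nat.cast : ℕ → ℕ∞) '' {n : ℕ | walk S ω n = g})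

/-- `μ` is the infinite product over `ℕ` of the uniform probability measure on `S`:
a probability measure giving each cylinder set on the first `n` coordinates
probability `|S|⁻ⁿ`.  (These conditions determine the product measure uniquely.) -/
def IsUniformProductMeasure {G : Type*} [Group G] (S : Finset G)
    (μ : Measure (ℕ → S)) : Prop :=
  IsProbabilityMeasure μ ∧
    ∀ (n : ℕ) (w : Fin n → S),
      μ {ω | ∀ i : Fin n, ω (i : ℕ) = w i} = ((S.card : ℝ≥0∞))⁻¹ ^ n

/-- The mean first passage time `d(g) = ∫ τ_g dμ`, valued in `[0,∞]`. -/
noncomputable def mfpt {G : Type*} [Group G] (S : Finset G) (μ : Measure (ℕ → S))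
    (g : G) : ℝ≥0∞ :=
  ∫⁻ ω, (tau S g ω : ℝ≥0∞) ∂μ

/-- The transition matrix of the uniform random walk on the Cayley graph:
`P(x,y) = 1/|S|` if `x⁻¹·y ∈ S` and `0` otherwise. -/
noncomputable def transMat {G : Type*} [Group G] [DecidableEq G] (S : Finset G) :
    Matrix G G ℝ :=
  Matrix.of fun x y => if x⁻¹ * y ∈ S then ((S.card : ℝ))⁻¹ else 0

/-- `A` with row `g` replaced by zeros, making `g` an absorbing state. -/
def absorb {G : Type*} [DecidableEq G] (g : G) (A : Matrix G G ℝ) : Matrix G G ℝ :=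
  Matrix.of fun x y => if x = g then 0 else A x y

section Aux

variable {G : Type*} [Group G]

theorem walk_zero (S : Finset G) (ω : ℕ → S) : walk S ω 0 = 1 := by
  simp [walk]

theorem walk_succ_front (S : Finset G) (ω : ℕ → S) (n : ℕ) :
    walk S ω (n + 1) = (ω 0 : G) * walk S (fun i => ω (i + 1)) n := by
  simp [walk, List.ofFn_succ]

theorem walk_congr {S : Finset G} {ω ω' : ℕ → S} {n : ℕ}
    (h : ∀ i < n, ω i = ω' i) : walk S ω n = walk S ω' n := by
  unfold walk
  have : (fun i : Fin n => (ω i : G)) = fun i : Fin n => (ω' i : G) :=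
    funext fun i => by rw [h i i.isLt]
  rw [this]

theorem tau_eq_iff (S : Finset G) (g : G) (ω : ℕ → S) (n : ℕ) :
    tau S g ω = (n : ℕ∞) ↔ walk S ω n = g ∧ ∀ k < n, walk S ω k ≠ g := by
  constructor
  · intro h
    have hA : {m : ℕ | walk S ω m = g}.Nonempty := by
      by_contra h'
      rw [Set.not_nonempty_iff_eq_empty] at h'
      rw [tau, h'] at h
      simp at h
    have key : tau S g ω = (↑(sInf {m : ℕ | walk S ω m = g}) : ℕ∞) := by
      refine le_antisymm (sInf_le ⟨_, Nat.sInf_mem hA, rfl⟩) (le_sInf ?_)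
      rintro b ⟨m, hm, rfl⟩
      exact_mod_cast Nat.sInf_le hm
    rw [h] at key
    have hn : n = sInf {m : ℕ | walk S ω m = g} := by exact_mod_cast key
    refine ⟨by rw [hn]; exact Nat.sInf_mem hA, fun k hk => ?_⟩
    rw [hn] at hk
    exact Nat.notMem_of_lt_sInf hk
  · rintro ⟨h1, h2⟩
    refine le_antisymm (sInf_le ⟨n, h1, rfl⟩) (le_sInf ?_)
    rintro b ⟨m, hm, rfl⟩
    have : n ≤ m := not_lt.1 fun hlt => h2 m hlt hm
    exact_mod_cast this

/-- extend a finite word by a default letter -/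
def extT {S : Finset G} (s₀ : S) {n : ℕ} (w : Fin n → S) : ℕ → S :=
  fun i => if h : i < n then w ⟨i, h⟩ else s₀

theorem extT_lt {S : Finset G} (s₀ : S) {n : ℕ} (w : Fin n → S) {i : ℕ} (h : i < n) :
    extT s₀ w i = w ⟨i, h⟩ := by simp [extT, h]

end Aux

section Cnt

variable {G : Type*} [Group G] [DecidableEq G]

/-- number of length-`n` words with partial products from `x` avoiding `g` strictly
before time `n` and hitting `g` at time `n`. -/
def cnt (S : Finset G) (g : G) : ℕ → G → ℕ
  | 0, x => if x = g then 1 else 0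
  | n + 1, x => if x = g then 0 else ∑ s : S, cnt S g n (x * s)

theorem cylinder_measure {S : Finset G} {μ : Measure (ℕ → S)}
    (hμ : IsUniformProductMeasure S μ) (n : ℕ) (T : Finset (Fin n → S)) :
    μ {ω | (fun i : Fin n => ω i) ∈ T} = T.card * ((S.card : ℝ≥0∞))⁻¹ ^ n := by
  classical
  have hset : {ω : ℕ → S | (fun i : Fin n => ω i) ∈ T}
      = ⋃ w ∈ T, {ω : ℕ → S | ∀ i : Fin n, ω (i : ℕ) = w i} := by
    ext ω
    simp only [Set.mem_setOf_eq, Set.mem_iUnion]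
    constructor
    · intro h; exact ⟨_, h, fun i => rfl⟩
    · rintro ⟨w, hw, hww⟩
      have : (fun i : Fin n => ω i) = w := funext hww
      rwa [this]
  rw [hset, measure_biUnion_finset]
  · rw [Finset.sum_congr rfl fun w _ => hμ.2 n w]
    simp [Finset.sum_const, mul_comm]
  · intro w _ w' _ hne
    simp only [Function.onFun]
    refine Set.disjoint_left.2 fun ω h1 h2 => hne ?_
    funext i
    rw [← h1 i, ← h2 i]
  · intro w _
    have : {ω : ℕ → S | ∀ i : Fin n, ω (i : ℕ) = w i}
        = ⋂ i : Fin n, (fun ω : ℕ → S => ω (i : ℕ)) ⁻¹' {w i} := by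
      ext ω; simp
    rw [this]
    exact MeasurableSet.iInter fun i =>
      (measurable_pi_apply _) MeasurableSpace.measurableSet_top

end Cnt

section Count

variable {G : Type*} [Group G] [DecidableEq G] {S : Finset G}

theorem walk_ext_succ (s₀ : S) {n : ℕ} (w : Fin (n + 1) → S) {k : ℕ} (hk : k ≤ n) :
    walk S (extT s₀ w) (k + 1) = (w 0 : G) * walk S (extT s₀ (Fin.tail w)) k := by
  rw [walk_succ_front]
  congr 1
  · refine walk_congr fun i hi => ?_
    have h1 : i + 1 < n + 1 := by omega
    have h2 : i < n := by omega
    rw [extT_lt s₀ w h1, extT_lt s₀ (Fin.tail w) h2]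
    rfl

theorem cons_iff (s₀ : S) (g : G) {n : ℕ} (x : G) (w : Fin (n + 1) → S) :
    (x * walk S (extT s₀ w) (n + 1) = g ∧ ∀ k < n + 1, x * walk S (extT s₀ w) k ≠ g)
      ↔ x ≠ g ∧ ((x * (w 0 : G)) * walk S (extT s₀ (Fin.tail w)) n = g ∧
          ∀ k < n, (x * (w 0 : G)) * walk S (extT s₀ (Fin.tail w)) k ≠ g) := by
  constructor
  · rintro ⟨h1, h2⟩
    refine ⟨?_, ?_, ?_⟩
    · have := h2 0 (Nat.succ_pos n); rwa [walk_zero, mul_one] at this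
    · rw [mul_assoc, ← walk_ext_succ s₀ w le_rfl]; exact h1
    · intro k hk
      have := h2 (k + 1) (by omega)
      rwa [walk_ext_succ s₀ w (by omega), ← mul_assoc] at this
  · rintro ⟨hx, h1, h2⟩
    constructor
    · rw [walk_ext_succ s₀ w le_rfl, ← mul_assoc]; exact h1
    · intro k hk
      match k with
      | 0 => rw [walk_zero, mul_one]; exact hx
      | k + 1 =>
        rw [walk_ext_succ s₀ w (by omega), ← mul_assoc]
        exact h2 k (by omega)

theorem count_eq (s₀ : S) (g : G) (n : ℕ) : ∀ x : G,
    (Finset.univ.filter fun w : Fin n → S =>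
      x * walk S (extT s₀ w) n = g ∧ ∀ k < n, x * walk S (extT s₀ w) k ≠ g).card
      = cnt S g n x := by
  induction n with
  | zero =>
    intro x
    by_cases hx : x = g
    · simp [cnt, hx, walk_zero, Finset.filter_true_of_mem]
    · simp [cnt, hx, walk_zero]
  | succ n ih =>
    intro x
    classical
    rw [Finset.card_filter]
    rw [Fintype.sum_equiv (Fin.consEquiv fun _ : Fin (n + 1) => S).symm
      (fun w : Fin (n + 1) → S =>
        if x * walk S (extT s₀ w) (n + 1) = g ∧ ∀ k < n + 1, x * walk S (extT s₀ w) k ≠ g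
        then 1 else 0)
      (fun p : S × (Fin n → S) =>
        if x ≠ g ∧ ((x * (p.1 : G)) * walk S (extT s₀ p.2) n = g ∧
            ∀ k < n, (x * (p.1 : G)) * walk S (extT s₀ p.2) k ≠ g)
        then 1 else 0)
      (fun w => by
        simp only [Fin.consEquiv_symm_apply]
        exact if_congr (cons_iff s₀ g x w) rfl rfl)]
    rw [Fintype.sum_prod_type]
    by_cases hx : x = g
    · simp [cnt, hx]
    · simp only [ne_eq, hx, not_false_eq_true, true_and]
      rw [cnt, if_neg hx]
      push_cast
      refine Finset.sum_congr rfl fun s _ => ?_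
      rw [← ih (x * (s : G)), Finset.card_filter]

end Count

section MatPow

variable {G : Type*} [Group G] [Fintype G] [DecidableEq G]

theorem matpow_entry (S : Finset G) (g : G) (n : ℕ) : ∀ x : G,
    ((absorb g (transMat S)) ^ n) x g = (cnt S g n x : ℝ) * ((S.card : ℝ))⁻¹ ^ n := by
  induction n with
  | zero =>
    intro x
    simp [cnt, Matrix.one_apply]
  | succ n ih =>
    intro x
    rw [pow_succ', Matrix.mul_apply]
    by_cases hx : x = g
    · simp [absorb, transMat, hx, cnt]
    · have hterm : ∀ y : G,
          absorb g (transMat S) x y * ((absorb g (transMat S)) ^ n) y g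
            = if x⁻¹ * y ∈ S then
                ((S.card : ℝ))⁻¹ * ((cnt S g n y : ℝ) * ((S.card : ℝ))⁻¹ ^ n) else 0 := by
        intro y
        rw [ih y]
        simp [absorb, transMat, hx, ite_mul]
      rw [Finset.sum_congr rfl fun y _ => hterm y]
      rw [Fintype.sum_equiv (Equiv.mulLeft x).symm
        (fun y : G => if x⁻¹ * y ∈ S then
          ((S.card : ℝ))⁻¹ * ((cnt S g n y : ℝ) * ((S.card : ℝ))⁻¹ ^ n) else 0)
        (fun t : G => if t ∈ S then
          ((S.card : ℝ))⁻¹ * ((cnt S g n (x * t) : ℝ) * ((S.card : ℝ))⁻¹ ^ n) else 0)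
        (fun y => by simp)]
      rw [Finset.sum_ite_mem, Finset.univ_inter]
      rw [cnt, if_neg hx]
      push_cast
      rw [Finset.sum_coe_sort S (fun t => (cnt S g n (x * t) : ℝ)), Finset.sum_mul,
        pow_succ]
      exact Finset.sum_congr rfl fun t _ => by ring

end MatPow

section Event

variable {G : Type*} [Group G] [DecidableEq G] {S : Finset G}

theorem tau_event (s₀ : S) (g : G) (n : ℕ) :
    {ω : ℕ → S | tau S g ω = (n : ℕ∞)}
      = {ω : ℕ → S | (fun i : Fin n => ω i) ∈
          (Finset.univ.filter fun w : Fin n → S =>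
            (1 : G) * walk S (extT s₀ w) n = g ∧
              ∀ k < n, (1 : G) * walk S (extT s₀ w) k ≠ g)} := by
  ext ω
  have hwk : ∀ k ≤ n, walk S (extT s₀ fun i : Fin n => ω i) k = walk S ω k := by
    intro k hk
    exact walk_congr fun i hi => by rw [extT_lt _ _ (lt_of_lt_of_le hi hk)]
  simp only [Set.mem_setOf_eq, Finset.mem_filter, Finset.mem_univ, true_and, one_mul,
    tau_eq_iff]
  constructor
  · rintro ⟨h1, h2⟩
    exact ⟨by rw [hwk n le_rfl]; exact h1,
      fun k hk => by rw [hwk k hk.le]; exact h2 k hk⟩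
  · rintro ⟨h1, h2⟩
    exact ⟨by rw [← hwk n le_rfl]; exact h1,
      fun k hk => by rw [← hwk k hk.le]; exact h2 k hk⟩

end Event

section Norm

attribute [local instance] Matrix.linftyOpNormedRing Matrix.linftyOpNormedAlgebra

variable {G : Type*} [Group G] [Fintype G] [DecidableEq G]

theorem norm_absorb_le (S : Finset G) (g : G) : ‖absorb g (transMat S)‖ ≤ 1 := by
  have h1 : ‖absorb g (transMat S)‖₊ ≤ 1 := by
    rw [Matrix.linfty_opNNNorm_def]
    refine Finset.sup_le fun x _ => ?_
    by_cases hx : x = g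
    · simp [absorb, transMat, hx]
    · have : ∀ y : G, ‖absorb g (transMat S) x y‖₊
          = if x⁻¹ * y ∈ S then ‖((S.card : ℝ))⁻¹‖₊ else 0 := by
        intro y
        simp [absorb, transMat, hx, apply_ite (fun t : ℝ => ‖t‖₊)]
      rw [Finset.sum_congr rfl fun y _ => this y]
      rw [Fintype.sum_equiv (Equiv.mulLeft x).symm
        (fun y : G => if x⁻¹ * y ∈ S then ‖((S.card : ℝ))⁻¹‖₊ else 0)
        (fun t : G => if t ∈ S then ‖((S.card : ℝ))⁻¹‖₊ else 0)
        (fun y => by simp)]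
      rw [Finset.sum_ite_mem, Finset.univ_inter, Finset.sum_const]
      rw [nnnorm_inv]
      have hc : ‖((S.card : ℝ))‖₊ = (S.card : ℝ≥0) := by
        simp [Real.nnnorm_natCast]
      rw [hc, nsmul_eq_mul]
      rcases Nat.eq_zero_or_pos S.card with h0 | h0
      · simp [h0]
      · have : ((S.card : ℝ≥0)) ≠ 0 := by positivity
        rw [mul_inv_cancel₀ this]
  have h2 : ((‖absorb g (transMat S)‖₊ : ℝ≥0) : ℝ) ≤ 1 := by exact_mod_cast h1
  rwa [coe_nnnorm] at h2

end Norm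

section Main

attribute [local instance] Matrix.linftyOpNormedRing Matrix.linftyOpNormedAlgebra

/-- Mason's rule for the Cayley graph walk with unit passage times:
for `g ≠ 1` and `0 ≤ z < 1`, the matrix `I − z·P_{[g]}` is invertible and the probability
generating function of the first passage time satisfies
`Σ_{n} zⁿ · μ{τ_g = n} = ((I − z·P_{[g]})⁻¹)_{1,g}`. -/
theorem mason_rule {G : Type*} [Group G] [Fintype G] [DecidableEq G]
    (S : Finset G) (hgen : Subgroup.closure (S : Set G) = ⊤) (hone : (1 : G) ∉ S)
    (μ : Measure (ℕ → S)) (hμ : IsUniformProductMeasure S μ)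
    (g : G) (hg : g ≠ 1) (z : ℝ) (hz0 : 0 ≤ z) (hz1 : z < 1) :
    IsUnit (1 - z • absorb g (transMat S)) ∧
      ∑' n : ℕ, z ^ n * (μ {ω | tau S g ω = (n : ℕ∞)}).toReal =
        (1 - z • absorb g (transMat S))⁻¹ 1 g := by
  classical
  -- S is nonempty
  have hSne : S.Nonempty := by
    rcases Finset.eq_empty_or_nonempty S with h | h
    · exfalso
      apply hg
      have hmem : g ∈ Subgroup.closure ((S : Set G)) := by rw [hgen]; trivial
      rw [h] at hmem
      simpa [Subgroup.closure_empty] using hmem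
    · exact h
  obtain ⟨s₀v, hs₀⟩ := hSne
  have hcard0 : S.card ≠ 0 := by
    simp [Finset.card_eq_zero]
    exact Finset.ne_empty_of_mem hs₀
  set Q : Matrix G G ℝ := absorb g (transMat S) with hQdef
  -- the measure of each first-passage event
  have hμn : ∀ n : ℕ, (μ {ω | tau S g ω = (n : ℕ∞)}).toReal
      = (cnt S g n 1 : ℝ) * ((S.card : ℝ))⁻¹ ^ n := by
    intro n
    rw [tau_event ⟨s₀v, hs₀⟩ g n, cylinder_measure hμ n _, count_eq ⟨s₀v, hs₀⟩ g n 1]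
    rw [ENNReal.toReal_mul, ENNReal.toReal_pow, ENNReal.toReal_inv]
    simp
  -- norm bound
  have hnorm : ‖z • Q‖ < 1 := by
    have h1 : ‖z • Q‖ ≤ z * 1 := by
      rw [norm_smul, Real.norm_eq_abs, abs_of_nonneg hz0]
      exact mul_le_mul_of_nonneg_left (norm_absorb_le S g) hz0
    calc ‖z • Q‖ ≤ z * 1 := h1
      _ = z := mul_one z
      _ < 1 := hz1
  haveI : CompleteSpace (Matrix G G ℝ) :=
    FiniteDimensional.complete ℝ _
  have hUnit : IsUnit (1 - z • Q) := isUnit_one_sub_of_norm_lt_one hnorm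
  refine ⟨hUnit, ?_⟩
  -- the inverse is the geometric series
  have hinv : (1 - z • Q)⁻¹ = ∑' n : ℕ, (z • Q) ^ n := by
    rw [Matrix.nonsing_inv_eq_ringInverse, ← geom_series_eq_inverse _ hnorm]
    rfl
  rw [hinv]
  -- entrywise evaluation of the series
  have hsummable : Summable fun n : ℕ => (z • Q) ^ n :=
    summable_geometric_of_norm_lt_one hnorm
  let φ : Matrix G G ℝ →ₗ[ℝ] ℝ :=
    { toFun := fun A => A 1 g
      map_add' := fun _ _ => rfl
      map_smul' := fun _ _ => rfl }
  have hφc : Continuous φ := LinearMap.continuous_of_finiteDimensional φ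
  have hmap : HasSum (fun n : ℕ => φ ((z • Q) ^ n)) (φ (∑' n : ℕ, (z • Q) ^ n)) :=
    hsummable.hasSum.map φ.toAddMonoidHom hφc
  have hts : (∑' n : ℕ, (z • Q) ^ n) 1 g = ∑' n : ℕ, ((z • Q) ^ n) 1 g :=
    (hmap.tsum_eq).symm
  rw [hts]
  refine tsum_congr fun n => ?_
  rw [hμn n, smul_pow, Matrix.smul_apply, smul_eq_mul, matpow_entry S g n 1]


end Main
end

section
/- Let k ≥ 1 and let G be the elementary abelian group (ZMod 2)^k (functions Fin k → ZMod 2 under pointwise addition), with generating set S consisting of the k standard basis vectors δ_1, …, δ_k. Then for every x ∈ G of Hamming weight w (the number of nonzero coordinates), the mean first passage time from the identity to x is d(x) = Σ_{s=1}^{w} (binom(k−1, s−1))⁻¹ · Σ_{r=s}^{k} binom(k, r). -/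
open MeasureTheory
open scoped ENNReal

/-- The random walk on the Cayley graph of an additively written group `(G,S)` started at
the identity: `W_0(ω) = 0` and `W_n(ω) = ω(0) + ω(1) + ⋯ + ω(n−1)`. -/
def walkAdd {G : Type*} [AddGroup G] (S : Finset G) (ω : ℕ → S) (n : ℕ) : G :=
  (List.ofFn fun i : Fin n => (ω i : G)).sum

/-- The first passage time `τ_g(ω) = inf { n : ℕ | W_n(ω) = g }`, valued in `ℕ∞`. -/
noncomputable def tauAdd {G : Type*} [AddGroup G] (S : Finset G) (g : G) (ω : ℕ → S) :
    ℕ∞ :=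
  sInf ((Nat.cast : ℕ → ℕ∞) '' {n : ℕ | walkAdd S ω n = g})

/-- `μ` is the infinite product over `ℕ` of the uniform probability measure on `S`:
a probability measure giving each cylinder set on the first `n` coordinates
probability `|S|⁻ⁿ`.  (These conditions determine the product measure uniquely.) -/
def IsUniformProductMeasureAdd {G : Type*} [AddGroup G] (S : Finset G)
    (μ : Measure (ℕ → S)) : Prop :=
  IsProbabilityMeasure μ ∧
    ∀ (n : ℕ) (w : Fin n → S),
      μ {ω | ∀ i : Fin n, ω (i : ℕ) = w i} = ((S.card : ℝ≥0∞))⁻¹ ^ n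

/-- The mean first passage time `d(g) = ∫ τ_g dμ`, valued in `[0,∞]`. -/
noncomputable def mfptAdd {G : Type*} [AddGroup G] (S : Finset G) (μ : Measure (ℕ → S))
    (g : G) : ℝ≥0∞ :=
  ∫⁻ ω, (tauAdd S g ω : ℝ≥0∞) ∂μ

section General

open Finset
open scoped Classical

variable {G : Type*} [AddGroup G] (S : Finset G)

lemma walkAdd_zero (ω : ℕ → S) : walkAdd S ω 0 = 0 := by
  simp [walkAdd]

lemma walkAdd_succ (ω : ℕ → S) (m : ℕ) :
    walkAdd S ω (m + 1) = (ω 0 : G) + walkAdd S (fun i => ω (i + 1)) m := by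
  simp [walkAdd, List.ofFn_succ]

lemma walkAdd_congr (ω ω' : ℕ → S) (m : ℕ) (h : ∀ i < m, ω i = ω' i) :
    walkAdd S ω m = walkAdd S ω' m := by
  have he : (fun i : Fin m => ((ω i : G))) = fun i : Fin m => ((ω' i : G)) := by
    funext i
    rw [h i i.isLt]
  unfold walkAdd
  rw [he]

variable (hS0 : S.Nonempty)

/-- extend a finite word to an infinite one -/
noncomputable def extWord (n : ℕ) (u : Fin n → S) : ℕ → S :=
  fun i => if h : i < n then u ⟨i, h⟩ else ⟨hS0.choose, hS0.choose_spec⟩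

lemma extWord_lt (n : ℕ) (u : Fin n → S) (i : ℕ) (h : i < n) :
    extWord S hS0 n u i = u ⟨i, h⟩ := by
  simp [extWord, h]

/-- the avoiding predicate on finite words -/
def AvoidP (n : ℕ) (x : G) (u : Fin n → S) : Prop :=
  ∀ m ≤ n, walkAdd S (extWord S hS0 n u) m ≠ x

/-- the set of avoiding words of length n -/
noncomputable def AvoidF (n : ℕ) (x : G) : Finset (Fin n → S) :=
  Finset.univ.filter (AvoidP S hS0 n x)

lemma avoidF_zero_card (x : G) (hx : x ≠ 0) : (AvoidF S hS0 0 x).card = 1 := by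
  have : AvoidF S hS0 0 x = Finset.univ := by
    apply Finset.eq_univ_iff_forall.2
    intro u
    simp only [AvoidF, Finset.mem_filter, Finset.mem_univ, true_and]
    intro m hm
    interval_cases m
    rw [walkAdd_zero]
    exact fun h => hx h.symm
  rw [this, Finset.card_univ]
  simp

lemma avoidF_card_zero (n : ℕ) : (AvoidF S hS0 n 0).card = 0 := by
  rw [Finset.card_eq_zero]
  apply Finset.eq_empty_iff_forall_notMem.2
  intro u hu
  simp only [AvoidF, Finset.mem_filter] at hu
  exact hu.2 0 (Nat.zero_le n) (walkAdd_zero S _)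

lemma extWord_cons (n : ℕ) (s : S) (u : Fin n → S) (i : ℕ) :
    extWord S hS0 (n+1) (Fin.cons s u) (i+1) = extWord S hS0 n u i := by
  unfold extWord
  by_cases h : i < n
  · rw [dif_pos (by omega : i + 1 < n + 1), dif_pos h]
    exact Fin.cons_succ (α := fun _ : Fin (n+1) => (S : Type _)) s u ⟨i, h⟩
  · rw [dif_neg (by omega), dif_neg h]

lemma avoidP_cons (n : ℕ) (x : G) (hx : x ≠ 0) (s : S) (u : Fin n → S) :
    AvoidP S hS0 (n+1) x (Fin.cons s u) ↔ AvoidP S hS0 n (-(s:G) + x) u := by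
  have hw : ∀ m : ℕ, walkAdd S (extWord S hS0 (n+1) (Fin.cons s u)) (m+1)
      = (s : G) + walkAdd S (extWord S hS0 n u) m := by
    intro m
    rw [walkAdd_succ]
    refine congrArg₂ (· + ·) ?_ ?_
    · show ((extWord S hS0 (n+1) (Fin.cons s u) 0 : S) : G) = s
      unfold extWord
      rw [dif_pos (Nat.succ_pos n)]
      rfl
    · exact walkAdd_congr S _ _ m (fun i _ => extWord_cons S hS0 n s u i)
  constructor
  · intro hP m hm
    intro hc
    apply hP (m+1) (by omega)
    rw [hw m, hc]
    simp [add_assoc]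
  · intro hP m hm
    cases m with
    | zero => rw [walkAdd_zero]; exact fun h => hx h.symm
    | succ m' =>
      intro hc
      apply hP m' (by omega)
      rw [hw m'] at hc
      rw [← hc]
      simp

lemma avoidF_card_succ (n : ℕ) (x : G) (hx : x ≠ 0) :
    (AvoidF S hS0 (n+1) x).card = ∑ s : S, (AvoidF S hS0 n (-(s:G) + x)).card := by
  classical
  rw [AvoidF, Finset.card_filter]
  rw [← Equiv.sum_comp (Fin.consEquiv (fun _ : Fin (n+1) => (S : Type _)))
    (fun u => if AvoidP S hS0 (n+1) x u then 1 else 0)]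
  rw [Fintype.sum_prod_type]
  apply Finset.sum_congr rfl
  intro s _
  rw [AvoidF, Finset.card_filter]
  apply Finset.sum_congr rfl
  intro u _
  have hc : (Fin.consEquiv fun _ : Fin (n+1) => (S : Type _))  (s, u) = Fin.cons s u := rfl
  rw [hc]
  by_cases h : AvoidP S hS0 n (-(s:G) + x) u
  · rw [if_pos h, if_pos ((avoidP_cons S hS0 n x hx s u).2 h)]
  · rw [if_neg h, if_neg (fun hc => h ((avoidP_cons S hS0 n x hx s u).1 hc))]

/-- cylinder set -/
def cylSet (n : ℕ) (u : Fin n → S) : Set (ℕ → S) := {ω | ∀ i : Fin n, ω (i : ℕ) = u i}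

lemma measurableSet_cylSet (n : ℕ) (u : Fin n → S) : MeasurableSet (cylSet S n u) := by
  have : cylSet S n u = ⋂ i : Fin n, (fun ω : ℕ → S => ω (i : ℕ)) ⁻¹' {u i} := by
    ext ω; simp [cylSet]
  rw [this]
  exact MeasurableSet.iInter fun i => (measurable_pi_apply _) (by trivial)

/-- the event that the walk avoids x up to time n -/
def avoidSet (n : ℕ) (x : G) : Set (ℕ → S) := {ω | ∀ m ≤ n, walkAdd S ω m ≠ x}

lemma avoidSet_eq_biUnion (n : ℕ) (x : G) :
    avoidSet S n x = ⋃ u ∈ AvoidF S hS0 n x, cylSet S n u := by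
  ext ω
  simp only [Set.mem_iUnion, avoidSet, Set.mem_setOf_eq]
  constructor
  · intro h
    refine ⟨fun i => ω (i : ℕ), ?_, fun i => rfl⟩
    simp only [AvoidF, Finset.mem_filter, Finset.mem_univ, true_and]
    intro m hm
    rw [walkAdd_congr S _ ω m (fun i hi => extWord_lt S hS0 n _ i (lt_of_lt_of_le hi hm))]
    exact h m hm
  · rintro ⟨u, hu, hcyl⟩
    simp only [AvoidF, Finset.mem_filter, Finset.mem_univ, true_and] at hu
    intro m hm
    rw [walkAdd_congr S ω (extWord S hS0 n u) m
      (fun i hi => by rw [extWord_lt S hS0 n u i (lt_of_lt_of_le hi hm)]; exact hcyl ⟨i, lt_of_lt_of_le hi hm⟩)]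
    exact hu m hm

include hS0 in
lemma measurableSet_avoidSet (n : ℕ) (x : G) : MeasurableSet (avoidSet S n x) := by
  rw [avoidSet_eq_biUnion S hS0 n x]
  exact (AvoidF S hS0 n x).measurableSet_biUnion (fun u _ => measurableSet_cylSet S n u)

lemma measure_avoidSet (μ : Measure (ℕ → S)) (hμ : IsUniformProductMeasureAdd S μ)
    (n : ℕ) (x : G) :
    μ (avoidSet S n x) = (AvoidF S hS0 n x).card * ((S.card : ℝ≥0∞))⁻¹ ^ n := by
  rw [avoidSet_eq_biUnion S hS0 n x]
  rw [measure_biUnion_finset ?disj (fun u _ => measurableSet_cylSet S n u)]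
  · have : ∀ u ∈ AvoidF S hS0 n x, μ (cylSet S n u) = ((S.card : ℝ≥0∞))⁻¹ ^ n := by
      intro u _
      exact hμ.2 n u
    rw [Finset.sum_congr rfl this, Finset.sum_const, nsmul_eq_mul]
  case disj =>
    intro u hu v hv huv
    refine Set.disjoint_left.2 fun ω hω hω' => huv ?_
    funext i
    rw [← hω i, ← hω' i]

lemma lt_tau_iff (n : ℕ) (x : G) (ω : ℕ → S) :
    (n : ℕ∞) < tauAdd S x ω ↔ ω ∈ avoidSet S n x := by
  rw [tauAdd, ← ENat.add_one_le_iff (by simp : (n : ℕ∞) ≠ ⊤), le_sInf_iff]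
  constructor
  · intro h m hm hc
    have h2 := h (m : ℕ∞) ⟨m, hc, rfl⟩
    have : ((n + 1 : ℕ) : ℕ∞) ≤ (m : ℕ∞) := by
      rw [Nat.cast_add, Nat.cast_one]; exact h2
    rw [Nat.cast_le] at this
    omega
  · intro h b hb
    rcases hb with ⟨m, hm, rfl⟩
    have : ¬ m ≤ n := fun hle => h m hle hm
    have : ((n + 1 : ℕ) : ℕ∞) ≤ (m : ℕ∞) := by rw [Nat.cast_le]; omega
    rw [Nat.cast_add, Nat.cast_one] at this
    exact this

lemma enat_cast_eq_tsum (a : ℕ∞) :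
    (a : ℝ≥0∞) = ∑' n : ℕ, if (n : ℕ∞) < a then (1 : ℝ≥0∞) else 0 := by
  cases a with
  | top =>
    have : ∀ n : ℕ, (if (n : ℕ∞) < (⊤ : ℕ∞) then (1 : ℝ≥0∞) else 0) = 1 := by
      intro n; rw [if_pos (by simp [lt_top_iff_ne_top])]
    rw [tsum_congr this, ENNReal.tsum_const_eq_top_of_ne_zero one_ne_zero]
    simp
  | coe m =>
    have h1 : ∀ n ∉ Finset.range m, (if ((n : ℕ) : ℕ∞) < (m : ℕ∞) then (1 : ℝ≥0∞) else 0) = 0 := by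
      intro n hn
      rw [if_neg]
      rw [Nat.cast_lt]
      simp only [Finset.mem_range] at hn
      omega
    rw [tsum_eq_sum h1]
    have h2 : ∀ n ∈ Finset.range m, (if ((n : ℕ) : ℕ∞) < (m : ℕ∞) then (1 : ℝ≥0∞) else 0) = 1 := by
      intro n hn
      simp only [Finset.mem_range] at hn
      rw [if_pos (by exact_mod_cast hn)]
    rw [Finset.sum_congr rfl h2, Finset.sum_const, Finset.card_range, nsmul_eq_mul, mul_one]
    simp

include hS0 in
lemma mfpt_eq_tsum (μ : Measure (ℕ → S)) (hμ : IsUniformProductMeasureAdd S μ) (x : G) :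
    mfptAdd S μ x = ∑' n : ℕ, ((AvoidF S hS0 n x).card : ℝ≥0∞) * ((S.card : ℝ≥0∞))⁻¹ ^ n := by
  have hpt : ∀ ω : ℕ → S, ((tauAdd S x ω : ℕ∞) : ℝ≥0∞)
      = ∑' n : ℕ, (avoidSet S n x).indicator (fun _ => (1 : ℝ≥0∞)) ω := by
    intro ω
    rw [enat_cast_eq_tsum]
    apply tsum_congr
    intro n
    rw [Set.indicator_apply]
    by_cases h : ω ∈ avoidSet S n x
    · rw [if_pos ((lt_tau_iff S n x ω).2 h), if_pos h]
    · rw [if_neg (fun hc => h ((lt_tau_iff S n x ω).1 hc)), if_neg h]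
  rw [mfptAdd, lintegral_congr hpt, lintegral_tsum (fun n =>
    ((measurable_const.indicator (measurableSet_avoidSet S hS0 n x)).aemeasurable))]
  apply tsum_congr
  intro n
  rw [lintegral_indicator_const (measurableSet_avoidSet S hS0 n x), one_mul,
    measure_avoidSet S hS0 μ hμ n x]

/-- summand of the mfpt series -/
noncomputable def dTerm (n : ℕ) (x : G) : ℝ≥0∞ :=
  ((AvoidF S hS0 n x).card : ℝ≥0∞) * ((S.card : ℝ≥0∞))⁻¹ ^ n

lemma dTerm_zero_ne (x : G) (hx : x ≠ 0) : dTerm S hS0 0 x = 1 := by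
  rw [dTerm, avoidF_zero_card S hS0 x hx]
  simp

lemma dTerm_at_zero (n : ℕ) : dTerm S hS0 n 0 = 0 := by
  rw [dTerm, avoidF_card_zero S hS0 n]
  simp

lemma dTerm_succ (n : ℕ) (x : G) (hx : x ≠ 0) :
    dTerm S hS0 (n+1) x
      = ((S.card : ℝ≥0∞))⁻¹ * ∑ s : S, dTerm S hS0 n (-(s:G) + x) := by
  rw [dTerm, avoidF_card_succ S hS0 n x hx]
  rw [Nat.cast_sum, Finset.sum_mul, Finset.mul_sum]
  apply Finset.sum_congr rfl
  intro s _
  rw [dTerm, pow_succ]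
  ring

lemma partialSum_le (f : G → ℝ≥0∞)
    (Hf : ∀ x : G, x ≠ 0 → f x = 1 + ((S.card : ℝ≥0∞))⁻¹ * ∑ s : S, f (-(s:G) + x))
    (N : ℕ) (x : G) :
    ∑ n ∈ Finset.range N, dTerm S hS0 n x ≤ f x := by
  induction N generalizing x with
  | zero => simp
  | succ N ih =>
    by_cases hx : x = 0
    · subst hx
      rw [Finset.sum_congr rfl (fun n _ => dTerm_at_zero S hS0 n)]
      simp
    · rw [Finset.sum_range_succ']
      rw [Finset.sum_congr rfl (fun n _ => dTerm_succ S hS0 n x hx), dTerm_zero_ne S hS0 x hx]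
      rw [← Finset.mul_sum, Finset.sum_comm]
      rw [add_comm, Hf x hx]
      gcongr
      exact ih _

lemma msum_eq (x : G) (hx : x ≠ 0) :
    ∑' n : ℕ, dTerm S hS0 n x
      = 1 + ((S.card : ℝ≥0∞))⁻¹ * ∑ s : S, ∑' n : ℕ, dTerm S hS0 n (-(s:G) + x) := by
  rw [tsum_eq_zero_add' ENNReal.summable, dTerm_zero_ne S hS0 x hx]
  congr 1
  rw [tsum_congr (fun n => dTerm_succ S hS0 n x hx), ENNReal.tsum_mul_left]
  congr 1
  exact Summable.tsum_finsetSum (fun s _ => ENNReal.summable)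

lemma msum_at_zero : ∑' n : ℕ, dTerm S hS0 n 0 = 0 := by
  rw [tsum_congr (fun n => dTerm_at_zero S hS0 n)]
  simp

end General

section Numeric

open Finset

/-- tail sum of binomial coefficients -/
noncomputable def binTail (k s : ℕ) : ℝ := ∑ r ∈ Finset.Icc s k, (Nat.choose k r : ℝ)

/-- expected time from weight s to weight s-1 -/
noncomputable def hTerm (k s : ℕ) : ℝ := ((Nat.choose (k-1) (s-1) : ℝ))⁻¹ * binTail k s

/-- MFPT from identity to word of weight w -/
noncomputable def Fval (k w : ℕ) : ℝ := ∑ s ∈ Finset.Icc 1 w, hTerm k s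

lemma hTerm_nonneg (k s : ℕ) : 0 ≤ hTerm k s := by
  apply mul_nonneg
  · positivity
  · apply Finset.sum_nonneg; intro r _; positivity

lemma Fval_nonneg (k w : ℕ) : 0 ≤ Fval k w :=
  Finset.sum_nonneg fun s _ => hTerm_nonneg k s

lemma Fval_zero (k : ℕ) : Fval k 0 = 0 := by simp [Fval]

lemma Fval_succ (k w : ℕ) : Fval k (w + 1) = Fval k w + hTerm k (w + 1) := by
  rw [Fval, Fval, ← Finset.sum_Icc_succ_top (by omega : 1 ≤ w + 1)]

lemma binTail_step (k s : ℕ) (hs : s ≤ k) :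
    binTail k s = (Nat.choose k s : ℝ) + binTail k (s + 1) := by
  have hins : Finset.Icc s k = insert s (Finset.Icc (s+1) k) := by
    ext r
    simp only [Finset.mem_Icc, Finset.mem_insert]
    omega
  rw [binTail, binTail, hins, Finset.sum_insert (by simp)]

lemma choose_id_left (k s : ℕ) (h1 : 1 ≤ s) (hs : s ≤ k) :
    k * Nat.choose (k-1) (s-1) = s * Nat.choose k s := by
  obtain ⟨k', rfl⟩ : ∃ k', k = k' + 1 := ⟨k - 1, by omega⟩
  obtain ⟨s', rfl⟩ : ∃ s', s = s' + 1 := ⟨s - 1, by omega⟩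
  simp only [Nat.add_sub_cancel]
  have := Nat.add_one_mul_choose_eq k' s'
  rw [this]
  ring

lemma choose_id_right (k s : ℕ) (hs : s ≤ k) :
    Nat.choose k s * (k - s) = k * Nat.choose (k-1) s := by
  by_cases hk : 1 ≤ k
  · obtain ⟨k', rfl⟩ : ∃ k', k = k' + 1 := ⟨k - 1, by omega⟩
    simp only [Nat.add_sub_cancel]
    have h1 := Nat.add_one_mul_choose_eq k' s
    have h2 := Nat.choose_succ_right_eq (k' + 1) s
    rw [← h1] at h2
    omega
  · have : k = 0 := by omega
    subst this
    interval_cases s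
    simp

lemma hTerm_ident (k s : ℕ) (h1 : 1 ≤ s) (hs : s ≤ k) :
    (s : ℝ) * hTerm k s = (k : ℝ) + ((k : ℝ) - s) * hTerm k (s + 1) := by
  have hCk : (0 : ℝ) < (Nat.choose k s : ℝ) := by
    exact_mod_cast Nat.choose_pos hs
  have hCk1 : (0 : ℝ) < (Nat.choose (k-1) (s-1) : ℝ) := by
    exact_mod_cast Nat.choose_pos (by omega : s - 1 ≤ k - 1)
  have hfirst : (s : ℝ) * hTerm k s = (k : ℝ) * ((Nat.choose k s : ℝ))⁻¹ * binTail k s := by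
    have := choose_id_left k s h1 hs
    have hcast : (k : ℝ) * (Nat.choose (k-1) (s-1) : ℝ) = (s : ℝ) * (Nat.choose k s : ℝ) := by
      exact_mod_cast this
    have key : (s : ℝ) * ((Nat.choose (k-1) (s-1) : ℝ))⁻¹ = (k : ℝ) * ((Nat.choose k s : ℝ))⁻¹ := by
      field_simp
      linarith [hcast]
    rw [hTerm, ← mul_assoc, key]
  by_cases hsk : s = k
  · subst hsk
    rw [hfirst]
    simp only [sub_self, zero_mul, add_zero]
    rw [binTail]
    rw [show Finset.Icc s s = {s} from Finset.Icc_self s]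
    simp
  · have hsk' : s + 1 ≤ k := by omega
    have hsecond : ((k : ℝ) - s) * hTerm k (s + 1)
        = (k : ℝ) * ((Nat.choose k s : ℝ))⁻¹ * binTail k (s + 1) := by
      have := choose_id_right k s hs
      have hcast : (Nat.choose k s : ℝ) * ((k : ℝ) - s) = (k : ℝ) * (Nat.choose (k-1) s : ℝ) := by
        have hks : ((k - s : ℕ) : ℝ) = (k : ℝ) - s := by
          rw [Nat.cast_sub hs]
        rw [← hks]
        exact_mod_cast this
      have hC1 : (0 : ℝ) < (Nat.choose (k-1) s : ℝ) := by
        exact_mod_cast Nat.choose_pos (by omega : s ≤ k - 1)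
      have key : ((k : ℝ) - s) * ((Nat.choose (k-1) s : ℝ))⁻¹ = (k : ℝ) * ((Nat.choose k s : ℝ))⁻¹ := by
        field_simp
        linarith [hcast]
      have hss : s + 1 - 1 = s := by omega
      rw [hTerm, hss, ← mul_assoc, key]
    rw [hfirst, hsecond, binTail_step k s hs]
    have : (Nat.choose k s : ℝ) ≠ 0 := ne_of_gt hCk
    field_simp

lemma Fval_harmonic (k w : ℕ) (h1 : 1 ≤ w) (hw : w ≤ k) :
    (k : ℝ) * Fval k w = (k : ℝ) + (w : ℝ) * Fval k (w - 1) + ((k : ℝ) - w) * Fval k (w + 1) := by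
  obtain ⟨v, rfl⟩ : ∃ v, w = v + 1 := ⟨w - 1, by omega⟩
  have hv : v + 1 - 1 = v := by omega
  rw [hv, Fval_succ k (v+1), Fval_succ k v]
  have := hTerm_ident k (v+1) (by omega) hw
  push_cast at this ⊢
  nlinarith [this]

end Numeric

section Hypercube

open Finset

variable (k : ℕ)

/-- standard basis vector -/
def deltaV (i : Fin k) : Fin k → ZMod 2 := Pi.single i 1

/-- Hamming weight -/
noncomputable def wtF (x : Fin k → ZMod 2) : ℕ :=
  (Finset.univ.filter fun i => x i ≠ 0).card

lemma deltaV_injective : Function.Injective (deltaV k) := by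
  intro i j hij
  by_contra hne
  have h1 : deltaV k i i = 1 := by simp [deltaV]
  have h2 : deltaV k j i = 0 := by
    simp only [deltaV]
    exact Pi.single_eq_of_ne hne 1
  rw [hij, h2] at h1
  exact one_ne_zero h1.symm

lemma zmod2_neg (a : ZMod 2) : -a = a := by revert a; decide

lemma neg_vec (y : Fin k → ZMod 2) : -y = y := by
  funext i
  exact zmod2_neg (y i)

lemma zmod2_cases (a : ZMod 2) : a = 0 ∨ a = 1 := by revert a; decide

lemma wtF_le (x : Fin k → ZMod 2) : wtF k x ≤ k := by
  calc wtF k x ≤ (Finset.univ : Finset (Fin k)).card := Finset.card_filter_le _ _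
  _ = k := by simp

lemma wtF_eq_zero_iff (x : Fin k → ZMod 2) : wtF k x = 0 ↔ x = 0 := by
  rw [wtF, Finset.card_eq_zero, Finset.filter_eq_empty_iff]
  constructor
  · intro h
    funext i
    have := h (Finset.mem_univ i)
    simpa using this
  · intro h i _
    rw [h]
    simp

lemma add_deltaV_apply (x : Fin k → ZMod 2) (i j : Fin k) :
    (x + deltaV k i) j = if j = i then x j + 1 else x j := by
  by_cases h : j = i
  · subst h
    simp [deltaV]
  · simp [deltaV, Pi.single_eq_of_ne h, h]

lemma wtF_add_deltaV_of_ne (x : Fin k → ZMod 2) (i : Fin k) (hi : x i ≠ 0) :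
    wtF k (x + deltaV k i) = wtF k x - 1 := by
  have hxi : x i = 1 := (zmod2_cases (x i)).resolve_left hi
  have hset : (Finset.univ.filter fun j => (x + deltaV k i) j ≠ 0)
      = (Finset.univ.filter fun j => x j ≠ 0).erase i := by
    ext j
    simp only [Finset.mem_filter, Finset.mem_univ, true_and, Finset.mem_erase]
    rw [add_deltaV_apply]
    by_cases h : j = i
    · subst h
      rw [if_pos rfl, hxi]
      simp [show (1:ZMod 2)+1 = 0 from by decide]
    · rw [if_neg h]
      tauto
  rw [wtF, hset, Finset.card_erase_of_mem (by simp [hi]), wtF]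

lemma wtF_add_deltaV_of_eq (x : Fin k → ZMod 2) (i : Fin k) (hi : x i = 0) :
    wtF k (x + deltaV k i) = wtF k x + 1 := by
  have hset : (Finset.univ.filter fun j => (x + deltaV k i) j ≠ 0)
      = insert i (Finset.univ.filter fun j => x j ≠ 0) := by
    ext j
    simp only [Finset.mem_filter, Finset.mem_univ, true_and, Finset.mem_insert]
    rw [add_deltaV_apply]
    by_cases h : j = i
    · subst h
      rw [if_pos rfl, hi]
      simp
    · rw [if_neg h]
      tauto
  rw [wtF, hset, Finset.card_insert_of_notMem (by simp [hi]), wtF]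

lemma sum_Fval_neighbors (x : Fin k → ZMod 2) :
    ∑ i : Fin k, Fval k (wtF k (x + deltaV k i))
      = (wtF k x : ℝ) * Fval k (wtF k x - 1) + ((k : ℝ) - wtF k x) * Fval k (wtF k x + 1) := by
  rw [← Finset.sum_filter_add_sum_filter_not Finset.univ (fun i => x i ≠ 0)]
  have h1 : ∀ i ∈ Finset.univ.filter (fun i => x i ≠ 0),
      Fval k (wtF k (x + deltaV k i)) = Fval k (wtF k x - 1) := by
    intro i hi
    simp only [Finset.mem_filter] at hi
    rw [wtF_add_deltaV_of_ne k x i hi.2]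
  have h2 : ∀ i ∈ Finset.univ.filter (fun i => ¬ x i ≠ 0),
      Fval k (wtF k (x + deltaV k i)) = Fval k (wtF k x + 1) := by
    intro i hi
    simp only [Finset.mem_filter, not_not] at hi
    rw [wtF_add_deltaV_of_eq k x i hi.2]
  rw [Finset.sum_congr rfl h1, Finset.sum_congr rfl h2, Finset.sum_const, Finset.sum_const]
  have hcard2 : (Finset.univ.filter (fun i => ¬ x i ≠ 0)).card = k - wtF k x := by
    have := Finset.card_filter_add_card_filter_not (s := (Finset.univ : Finset (Fin k)))
      (p := fun i => x i ≠ 0)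
    simp only [Finset.card_univ, Fintype.card_fin] at this
    simp only [wtF]
    omega
  rw [hcard2]
  have hle := wtF_le k x
  rw [nsmul_eq_mul, nsmul_eq_mul, Nat.cast_sub hle]
  rfl

lemma Fval_harmonic_real (x : Fin k → ZMod 2) (hk : 1 ≤ k) (hx : x ≠ 0) :
    Fval k (wtF k x) = 1 + (k : ℝ)⁻¹ * ∑ i : Fin k, Fval k (wtF k (x + deltaV k i)) := by
  have hw1 : 1 ≤ wtF k x := by
    rcases Nat.eq_zero_or_pos (wtF k x) with h | h
    · exact absurd ((wtF_eq_zero_iff k x).1 h) hx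
    · omega
  have hwk := wtF_le k x
  have hharm := Fval_harmonic k (wtF k x) hw1 hwk
  rw [sum_Fval_neighbors k x]
  have hkpos : (0 : ℝ) < k := by exact_mod_cast hk
  field_simp
  linarith [hharm]

end Hypercube

section MaxPrinciple

lemma exists_ne_coord (k : ℕ) (x : Fin k → ZMod 2) (hx : x ≠ 0) : ∃ i, x i ≠ 0 := by
  by_contra hc
  push_neg at hc
  exact hx (funext fun i => hc i)

lemma maxPrinciple_aux (k : ℕ) (hk : 1 ≤ k) (g : (Fin k → ZMod 2) → ℝ)
    (hg0 : g 0 = 0)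
    (hgh : ∀ x, x ≠ 0 → g x = (k : ℝ)⁻¹ * ∑ i : Fin k, g (x + deltaV k i)) :
    ∀ (w : ℕ) (x : Fin k → ZMod 2), wtF k x = w → (∀ y, g y ≤ g x) → g x ≤ 0 := by
  intro w
  induction w with
  | zero =>
    intro x hw _
    rw [(wtF_eq_zero_iff k x).1 hw, hg0]
  | succ w ih =>
    intro x hw hmax
    have hx : x ≠ 0 := by
      intro h
      rw [h, (wtF_eq_zero_iff k 0).2 rfl] at hw
      omega
    have hkpos : (0 : ℝ) < k := by exact_mod_cast hk
    have hsum : ∑ i : Fin k, g (x + deltaV k i) = (k : ℝ) * g x := by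
      have := hgh x hx
      field_simp at this
      linarith [this]
    have hall : ∀ i : Fin k, g (x + deltaV k i) = g x := by
      by_contra hc
      push_neg at hc
      obtain ⟨i0, hi0⟩ := hc
      have hlt : ∑ i : Fin k, g (x + deltaV k i) < ∑ _i : Fin k, g x := by
        apply Finset.sum_lt_sum (fun i _ => hmax _)
        exact ⟨i0, Finset.mem_univ i0, lt_of_le_of_ne (hmax _) hi0⟩
      rw [Finset.sum_const, Finset.card_univ, Fintype.card_fin, nsmul_eq_mul, hsum] at hlt
      exact lt_irrefl _ hlt
    obtain ⟨i, hi⟩ := exists_ne_coord k x hx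
    have hwy : wtF k (x + deltaV k i) = w := by
      rw [wtF_add_deltaV_of_ne k x i hi, hw]
      omega
    have hgy : g (x + deltaV k i) = g x := hall i
    have := ih (x + deltaV k i) hwy (fun y => by rw [hgy]; exact hmax y)
    linarith [this]

lemma maxPrinciple (k : ℕ) (hk : 1 ≤ k) (g : (Fin k → ZMod 2) → ℝ)
    (hg0 : g 0 = 0)
    (hgh : ∀ x, x ≠ 0 → g x = (k : ℝ)⁻¹ * ∑ i : Fin k, g (x + deltaV k i)) :
    ∀ x, g x ≤ 0 := by
  obtain ⟨x0, hx0⟩ := Finite.exists_max g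
  intro x
  calc g x ≤ g x0 := hx0 x
  _ ≤ 0 := maxPrinciple_aux k hk g hg0 hgh (wtF k x0) x0 rfl hx0

end MaxPrinciple

section Master

lemma master (k : ℕ) (hk : 1 ≤ k) (S : Finset (Fin k → ZMod 2))
    (hS : S = Finset.univ.image fun i : Fin k => Pi.single i (1 : ZMod 2))
    (μ : Measure (ℕ → S)) (hμ : IsUniformProductMeasureAdd S μ)
    (x : Fin k → ZMod 2) :
    mfptAdd S μ x = ENNReal.ofReal (Fval k (wtF k x)) := by
  classical
  have hmemS : ∀ i : Fin k, deltaV k i ∈ S := by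
    intro i; rw [hS]; exact Finset.mem_image_of_mem _ (Finset.mem_univ i)
  have hS0 : S.Nonempty := ⟨deltaV k ⟨0, hk⟩, hmemS _⟩
  have hcard : S.card = k := by
    have hinj : Function.Injective (fun i : Fin k => Pi.single i (1 : ZMod 2)) :=
      deltaV_injective k
    rw [hS, Finset.card_image_of_injective _ hinj, Finset.card_univ, Fintype.card_fin]
  have hkR : (0 : ℝ) < k := by exact_mod_cast hk
  have hk0 : (k : ℝ≥0∞) ≠ 0 := by
    simp only [ne_eq, Nat.cast_eq_zero]
    omega
  -- sum conversion
  have hconv : ∀ (M : Type) (_ : AddCommMonoid M) (g : (Fin k → ZMod 2) → M)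
      (y : Fin k → ZMod 2),
      ∑ s : S, g (-(s : Fin k → ZMod 2) + y) = ∑ i : Fin k, g (y + deltaV k i) := by
    intro M _ g y
    rw [Finset.sum_coe_sort S (fun s => g (-s + y))]
    rw [hS, show (fun i : Fin k => Pi.single i (1 : ZMod 2)) = deltaV k from rfl,
      Finset.sum_image (fun i _ j _ h => deltaV_injective k h)]
    apply Finset.sum_congr rfl
    intro i _
    rw [neg_vec k (deltaV k i), add_comm (deltaV k i) y]
  set fE : (Fin k → ZMod 2) → ℝ≥0∞ := fun y => ENNReal.ofReal (Fval k (wtF k y)) with hfE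
  have Hf : ∀ y : Fin k → ZMod 2, y ≠ 0 →
      fE y = 1 + ((S.card : ℝ≥0∞))⁻¹ * ∑ s : S, fE (-(s : Fin k → ZMod 2) + y) := by
    intro y hy
    rw [hconv _ _ fE y]
    have hsum : ∑ i : Fin k, fE (y + deltaV k i)
        = ENNReal.ofReal (∑ i : Fin k, Fval k (wtF k (y + deltaV k i))) := by
      rw [ENNReal.ofReal_sum_of_nonneg (fun i _ => Fval_nonneg k _)]
    rw [hsum, hcard]
    have h1 : ((k : ℝ≥0∞))⁻¹ = ENNReal.ofReal ((k : ℝ)⁻¹) := by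
      rw [ENNReal.ofReal_inv_of_pos hkR, ENNReal.ofReal_natCast]
    have hnn : (0:ℝ) ≤ (k : ℝ)⁻¹ * ∑ i : Fin k, Fval k (wtF k (y + deltaV k i)) := by
      apply mul_nonneg (by positivity)
      exact Finset.sum_nonneg (fun i _ => Fval_nonneg k _)
    rw [h1, ← ENNReal.ofReal_mul (by positivity), ← ENNReal.ofReal_one,
      ← ENNReal.ofReal_add (by norm_num) hnn]
    show ENNReal.ofReal (Fval k (wtF k y)) = _
    rw [Fval_harmonic_real k y hk hy]
  set m : (Fin k → ZMod 2) → ℝ≥0∞ := fun y => ∑' n, dTerm S hS0 n y with hm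
  have hmfpt : mfptAdd S μ x = m x := by
    rw [mfpt_eq_tsum S hS0 μ hμ x]
    rfl
  have hle : ∀ y, m y ≤ fE y := by
    intro y
    apply Summable.tsum_le_of_sum_range_le ENNReal.summable
    intro n
    exact partialSum_le S hS0 fE Hf n y
  have hfin : ∀ y, m y ≠ ⊤ := fun y => ne_top_of_le_ne_top ENNReal.ofReal_ne_top (hle y)
  set m' : (Fin k → ZMod 2) → ℝ := fun y => (m y).toReal with hm'
  have hm0 : m 0 = 0 := msum_at_zero S hS0
  have hqne : ((S.card : ℝ≥0∞))⁻¹ ≠ ⊤ := by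
    rw [hcard]
    exact ENNReal.inv_ne_top.2 hk0
  have hmrec : ∀ y : Fin k → ZMod 2, y ≠ 0 →
      m' y = 1 + (k : ℝ)⁻¹ * ∑ i : Fin k, m' (y + deltaV k i) := by
    intro y hy
    have h2 : m y = 1 + ((S.card : ℝ≥0∞))⁻¹ * ∑ s : S, m (-(s : Fin k → ZMod 2) + y) :=
      msum_eq S hS0 y hy
    have hSg : ∑ s : S, m (-(s : Fin k → ZMod 2) + y) ≠ ⊤ := by
      refine (ENNReal.sum_lt_top.mpr fun s _ => ?_).ne
      exact lt_top_iff_ne_top.2 (hfin _)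
    have h3 : m' y = (1 + ((S.card : ℝ≥0∞))⁻¹ * ∑ s : S, m (-(s : Fin k → ZMod 2) + y)).toReal := by
      simp only [hm']
      rw [h2]
    rw [h3, ENNReal.toReal_add (by simp) (ENNReal.mul_ne_top hqne hSg), ENNReal.toReal_one,
      ENNReal.toReal_mul]
    congr 1
    have hq : (((S.card : ℝ≥0∞))⁻¹).toReal = (k : ℝ)⁻¹ := by
      rw [hcard, ENNReal.toReal_inv, ENNReal.toReal_natCast]
    rw [hq]
    congr 1
    rw [ENNReal.toReal_sum (fun s _ => hfin _)]
    exact hconv ℝ _ (fun z => (m z).toReal) y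
  -- comparison function
  set g : (Fin k → ZMod 2) → ℝ := fun y => Fval k (wtF k y) - m' y with hg
  have hg0 : g 0 = 0 := by
    simp only [hg, hm']
    rw [hm0, (wtF_eq_zero_iff k 0).2 rfl, Fval_zero]
    simp
  have hgharm : ∀ y : Fin k → ZMod 2, y ≠ 0 →
      g y = (k : ℝ)⁻¹ * ∑ i : Fin k, g (y + deltaV k i) := by
    intro y hy
    simp only [hg]
    rw [Fval_harmonic_real k y hk hy, hmrec y hy]
    rw [Finset.sum_sub_distrib, mul_sub]
    ring
  have hgnonneg : ∀ y, 0 ≤ g y := by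
    intro y
    simp only [hg, hm', sub_nonneg]
    have := ENNReal.toReal_mono ENNReal.ofReal_ne_top (hle y)
    rwa [ENNReal.toReal_ofReal (Fval_nonneg k _)] at this
  have hgzero : ∀ y, g y = 0 := fun y =>
    le_antisymm (maxPrinciple k hk g hg0 hgharm y) (hgnonneg y)
  have hfinal : m x = fE x := by
    rw [← ENNReal.toReal_eq_toReal_iff' (hfin x) ENNReal.ofReal_ne_top]
    have := hgzero x
    simp only [hg, hm', sub_eq_zero] at this
    rw [ENNReal.toReal_ofReal (Fval_nonneg k _)]
    exact this.symm
  rw [hmfpt, hfinal]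

end Master

/-- for the elementary abelian group `(ZMod 2)^k` with the `k` standard
basis vectors as generators, the mean first passage time from the identity to an element
`x` of Hamming weight `w` is `d(x) = Σ_{s=1}^{w} binom(k−1, s−1)⁻¹ · Σ_{r=s}^{k} binom(k, r)`. -/
theorem mfpt_elementary_abelian (k : ℕ) (hk : 1 ≤ k)
    (S : Finset (Fin k → ZMod 2))
    (hS : S = Finset.univ.image fun i : Fin k => Pi.single i (1 : ZMod 2))
    (μ : Measure (ℕ → S)) (hμ : IsUniformProductMeasureAdd S μ)
    (x : Fin k → ZMod 2) (w : ℕ)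
    (hw : (Finset.univ.filter fun i : Fin k => x i ≠ 0).card = w) :
    mfptAdd S μ x =
      ENNReal.ofReal (∑ s ∈ Finset.Icc 1 w,
        ((Nat.choose (k - 1) (s - 1) : ℝ))⁻¹ *
          ∑ r ∈ Finset.Icc s k, (Nat.choose k r : ℝ)) := by
  rw [master k hk S hS μ hμ x]
  have hwt : wtF k x = w := hw
  rw [hwt]
  rfl
end
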